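/- arXiv:math/0608431 — 2 statements merged into one kernel-verified Lean document; each statement's English description precedes it below -/
import Mathlib

section
/- For every continuous potential A on Σ that depends only on the forward coordinate, the maximum of ∫ A(x) dμ̂(y,x) over holonomic probabilities μ̂ equals the maximum of ∫ A dμ over σ-invariant probabilities μ. -/
open MeasureTheory

section AubryMather

variable {r : ℕ} {M : Fin r → Fin r → Bool}

/-- One-sided subshift of finite type on `r` symbols with transition matrix `M`. -/
abbrev SigSp (r : ℕ) (M : Fin r → Fin r → Bool) :=
  {x : ℕ → Fin r // ∀ j, M (x j) (x (j + 1)) = true}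

/-- The dual subshift, with transposed transition matrix (coordinates `(…, y₁, y₀)`). -/
abbrev DualSp (r : ℕ) (M : Fin r → Fin r → Bool) :=
  {y : ℕ → Fin r // ∀ j, M (y (j + 1)) (y j) = true}

/-- The natural extension `Σ̂ ⊂ Σ* × Σ`: pairs `(y,x)` with `M (y₀, x₀) = 1`. -/
abbrev NatExt (r : ℕ) (M : Fin r → Fin r → Bool) :=
  {p : DualSp r M × SigSp r M // M (p.1.1 0) (p.2.1 0) = true}

/-- Prepend a symbol to a sequence. -/
def prepend (a : Fin r) (x : ℕ → Fin r) : ℕ → Fin r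
  | 0 => a
  | m + 1 => x m

/-- The left shift `σ` on `Σ`. -/
def shiftS (x : SigSp r M) : SigSp r M := ⟨fun n => x.1 (n + 1), fun j => x.2 (j + 1)⟩

/-- The projection `π₁(y,x) = x`. -/
def proj1 (p : NatExt r M) : SigSp r M := p.1.2

/-- `τ(y,x) = τ_y(x) = (y₀, x₀, x₁, …)`. -/
def tau (p : NatExt r M) : SigSp r M :=
  ⟨prepend (p.1.1.1 0) p.1.2.1, by
    intro j
    cases j with
    | zero => exact p.2
    | succ m => exact p.1.2.2 m⟩

/-- The two-sided shift `σ̂` on the natural extension. -/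
def hatShift (p : NatExt r M) : NatExt r M :=
  ⟨(⟨prepend (p.1.2.1 0) p.1.1.1, by
      intro j
      cases j with
      | zero => exact p.2
      | succ m => exact p.1.1.2 m⟩, shiftS p.1.2), p.1.2.2 0⟩

/-- Holonomic probability measures on `Σ̂`. -/
def Holonomic (μ : Measure (NatExt r M)) : Prop :=
  IsProbabilityMeasure μ ∧
    ∀ f : C(SigSp r M, ℝ), (∫ p, f (tau p) ∂μ) = ∫ p, f (proj1 p) ∂μ

/-- `β_A`, the maximal holonomic value of the potential `A`. -/
noncomputable def betaA (A : NatExt r M → ℝ) : ℝ :=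
  ⨆ μ : {μ : Measure (NatExt r M) // Holonomic μ}, ∫ p, A p ∂(μ.1)

open Classical in
/-- The metric `d(x, x̄) = λ^{min {j : x_j ≠ x̄_j}}` on `Σ`. -/
noncomputable def dS (lam : ℝ) (x x' : SigSp r M) : ℝ :=
  if h : x.1 = x'.1 then 0
  else lam ^ Nat.find (show ∃ j, x.1 j ≠ x'.1 j from Function.ne_iff.mp h)

open Classical in
/-- The analogous metric on `Σ*`. -/
noncomputable def dDual (lam : ℝ) (y y' : DualSp r M) : ℝ :=
  if h : y.1 = y'.1 then 0
  else lam ^ Nat.find (show ∃ j, y.1 j ≠ y'.1 j from Function.ne_iff.mp h)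

/-- The metric on `Σ̂ ⊂ Σ* × Σ`. -/
noncomputable def dHat (lam : ℝ) (p q : NatExt r M) : ℝ :=
  max (dDual lam p.1.1 q.1.1) (dS lam p.1.2 q.1.2)

/-- `u` is `θ`-Hölder on `Σ` with constant `C`. -/
def HolderOnSig (lam θ C : ℝ) (u : SigSp r M → ℝ) : Prop :=
  ∀ x x', |u x - u x'| ≤ C * (dS lam x x') ^ θ

/-- `A` is `θ`-Hölder on `Σ̂` with constant `C`. -/
def HolderOnExt (lam θ C : ℝ) (A : NatExt r M → ℝ) : Prop :=
  ∀ p q, |A p - A q| ≤ C * (dHat lam p q) ^ θ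

/-- `(Σ,σ)` is (topologically) transitive. -/
def TransitiveShift (r : ℕ) (M : Fin r → Fin r → Bool) : Prop :=
  ∀ U V : Set (SigSp r M), IsOpen U → IsOpen V → U.Nonempty → V.Nonempty →
    ∃ n : ℕ, (shiftS^[n] '' U ∩ V).Nonempty

/-- `(Σ,σ)` is topologically mixing. -/
def MixingShift (r : ℕ) (M : Fin r → Fin r → Bool) : Prop :=
  ∀ U V : Set (SigSp r M), IsOpen U → IsOpen V → U.Nonempty → V.Nonempty →
    ∃ K : ℕ, ∀ k > K, (shiftS^[k] '' U ∩ V).Nonempty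

/-- A chain of length `k` starting at `x`: `x⁰ = x`, `x^{j+1} = τ_{yʲ}(xʲ)`. -/
def IsChainFrom (x : SigSp r M) (k : ℕ) (p : ℕ → NatExt r M) : Prop :=
  (1 ≤ k → proj1 (p 0) = x) ∧ ∀ j, j + 1 < k → proj1 (p (j + 1)) = tau (p j)

/-- A path in `P(x, x̄, ε)`: begins at `x̄`, ends within `ε` of `x`. -/
def InPath (lam ε : ℝ) (x xbar : SigSp r M) (k : ℕ) (p : ℕ → NatExt r M) : Prop :=
  1 ≤ k ∧ proj1 (p 0) = xbar ∧ (∀ j, j + 1 < k → proj1 (p (j + 1)) = tau (p j)) ∧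
    dS lam (tau (p (k - 1))) x < ε

/-- `S_A^ε(x, x̄)`. -/
noncomputable def SAeps (lam : ℝ) (A : NatExt r M → ℝ) (ε : ℝ) (x xbar : SigSp r M) : EReal :=
  sInf {v : EReal | ∃ k p, InPath lam ε x xbar k p ∧
    v = ((- ∑ j ∈ Finset.range k, (A (p j) - betaA A) : ℝ) : EReal)}

/-- The Mañé potential `S_A(x, x̄) = lim_{ε→0} S_A^ε(x, x̄)`. -/
noncomputable def ManePot (lam : ℝ) (A : NatExt r M → ℝ) (x xbar : SigSp r M) : EReal :=
  ⨆ (ε : ℝ) (_ : 0 < ε), SAeps lam A ε x xbar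

/-- `x` is non-wandering with respect to `A`. -/
def NonWand (lam : ℝ) (A : NatExt r M → ℝ) (x : SigSp r M) : Prop :=
  ∀ ε > 0, ∃ k p, InPath lam ε x x k p ∧
    |∑ j ∈ Finset.range k, (A (p j) - betaA A)| < ε

/-- `x` is `u`-connected to `x̄`. -/
def UConnected (lam : ℝ) (A : NatExt r M → ℝ) (u : SigSp r M → ℝ)
    (x xbar : SigSp r M) : Prop :=
  ∀ ε > 0, ∃ k p, InPath lam ε x xbar k p ∧
    |∑ j ∈ Finset.range k, (A (p j) - betaA A) - (u x - u xbar)| < ε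

/-- A (continuous) sub-action for `A`. -/
def SubAction (A : NatExt r M → ℝ) (u : SigSp r M → ℝ) : Prop :=
  Continuous u ∧ ∀ p : NatExt r M, u (proj1 p) ≤ u (tau p) - A p + betaA A

/-- A calibrated sub-action for `A`:
`u(x) = min_{y ∈ Σ*_x} [u(τ_y(x)) − A(y,x) + β_A]`. -/
def Calibrated (A : NatExt r M → ℝ) (u : SigSp r M → ℝ) : Prop :=
  Continuous u ∧ ∀ x : SigSp r M,
    IsLeast {v : ℝ | ∃ p : NatExt r M, proj1 p = x ∧ v = u (tau p) - A p + betaA A} (u x)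

/-- The candidate maximal sub-action `u_A` (for `β_A = 0`). -/
noncomputable def uMax (A : NatExt r M → ℝ) (x : SigSp r M) : ℝ :=
  sInf {v : ℝ | ∃ k p, IsChainFrom x k p ∧ v = -∑ j ∈ Finset.range k, A (p j)}

/-- The operator `L_ρ(f)(x) = ρ · min_{y ∈ Σ*_x} [f(τ_y(x)) − A(y,x)]`. -/
noncomputable def Lrho (A : NatExt r M → ℝ) (rho : ℝ) (f : SigSp r M → ℝ)
    (x : SigSp r M) : ℝ :=
  rho * sInf {v : ℝ | ∃ p : NatExt r M, proj1 p = x ∧ v = f (tau p) - A p}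

end AubryMather

/-- The (topological) support of a measure. -/
def msupport {X : Type*} [TopologicalSpace X] [MeasurableSpace X]
    (μ : MeasureTheory.Measure X) : Set X :=
  {p | ∀ U : Set X, IsOpen U → p ∈ U → 0 < μ U}


section Proof4

variable {r : ℕ} {M : Fin r → Fin r → Bool}

instance : TopologicalSpace.PseudoMetrizableSpace (SigSp r M) :=
  TopologicalSpace.PseudoMetrizableSpace.subtype _
instance : SecondCountableTopology (SigSp r M) :=
  TopologicalSpace.secondCountableTopology_induced _ _ Subtype.val
instance : SecondCountableTopology (DualSp r M) :=
  TopologicalSpace.secondCountableTopology_induced _ _ Subtype.val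
instance : BorelSpace (SigSp r M) := Subtype.borelSpace _
instance : BorelSpace (DualSp r M) := Subtype.borelSpace _
instance : BorelSpace (NatExt r M) := Subtype.borelSpace _

lemma continuous_shiftS : Continuous (shiftS (r := r) (M := M)) := by
  apply Continuous.subtype_mk
  exact continuous_pi fun n => (continuous_apply (n + 1)).comp continuous_subtype_val

lemma continuous_proj1 : Continuous (proj1 (r := r) (M := M)) :=
  continuous_snd.comp continuous_subtype_val

lemma continuous_tau : Continuous (tau (r := r) (M := M)) := by
  apply Continuous.subtype_mk
  apply continuous_pi
  intro n
  cases n with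
  | zero =>
    exact (continuous_apply 0).comp
      (continuous_subtype_val.comp (continuous_fst.comp continuous_subtype_val))
  | succ m =>
    exact (continuous_apply m).comp
      (continuous_subtype_val.comp (continuous_snd.comp continuous_subtype_val))

lemma measurable_shiftS' : Measurable (shiftS (r := r) (M := M)) :=
  continuous_shiftS.measurable

lemma shiftS_tau (p : NatExt r M) : shiftS (tau p) = proj1 p :=
  Subtype.ext (funext fun _ => rfl)

end Proof4


section Proof4b
variable {r : ℕ} {M : Fin r → Fin r → Bool}

theorem forward_dir (A : SigSp r M → ℝ) (hA : Continuous A)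
    {μ : Measure (NatExt r M)} (hμ : Holonomic μ) :
    ∃ ν : Measure (SigSp r M), (IsProbabilityMeasure ν ∧ ν.map shiftS = ν) ∧
      ∫ x, A x ∂ν = ∫ p, A (proj1 p) ∂μ := by
  obtain ⟨hprob, hhol⟩ := hμ
  haveI := hprob
  have hπ : Measurable (proj1 (r := r) (M := M)) := continuous_proj1.measurable
  haveI hνp : IsProbabilityMeasure (μ.map proj1) :=
    Measure.isProbabilityMeasure_map hπ.aemeasurable
  have key : ∀ g : C(SigSp r M, ℝ),
      ∫ x, g x ∂((μ.map proj1).map shiftS) = ∫ x, g x ∂(μ.map proj1) := by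
    intro g
    have e1 : ∫ x, g x ∂((μ.map proj1).map shiftS) = ∫ x, g (shiftS x) ∂(μ.map proj1) :=
      integral_map measurable_shiftS'.aemeasurable g.continuous.aestronglyMeasurable
    have e2 : ∫ x, g (shiftS x) ∂(μ.map proj1) = ∫ p, g (shiftS (proj1 p)) ∂μ :=
      integral_map hπ.aemeasurable
        ((g.continuous.comp continuous_shiftS).aestronglyMeasurable)
    have e3 : ∫ x, g x ∂(μ.map proj1) = ∫ p, g (proj1 p) ∂μ :=
      integral_map hπ.aemeasurable g.continuous.aestronglyMeasurable
    have h2 := hhol (g.comp ⟨shiftS, continuous_shiftS⟩)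
    simp only [ContinuousMap.comp_apply, ContinuousMap.coe_mk] at h2
    have h3 : ∫ p, g (shiftS (tau p)) ∂μ = ∫ p, g (proj1 p) ∂μ :=
      integral_congr_ae (Filter.Eventually.of_forall fun p => by simp only []; rw [shiftS_tau])
    rw [e1, e2, e3, ← h2, h3]
  refine ⟨μ.map proj1, ⟨hνp, ?_⟩, ?_⟩
  · haveI : IsProbabilityMeasure ((μ.map proj1).map shiftS) :=
      Measure.isProbabilityMeasure_map measurable_shiftS'.aemeasurable
    apply ext_of_forall_lintegral_eq_of_IsFiniteMeasure
    intro f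
    have i1 : Integrable (fun x => (f x : ℝ)) ((μ.map proj1).map shiftS) :=
      BoundedContinuousFunction.integrable_of_nnreal _ f
    have i2 : Integrable (fun x => (f x : ℝ)) (μ.map proj1) :=
      BoundedContinuousFunction.integrable_of_nnreal _ f
    rw [lintegral_coe_eq_integral _ i1, lintegral_coe_eq_integral _ i2]
    have := key ⟨fun x => (f x : ℝ), NNReal.continuous_coe.comp f.continuous⟩
    simp only [ContinuousMap.coe_mk] at this
    rw [this]
  · exact integral_map hπ.aemeasurable hA.aestronglyMeasurable

end Proof4b

section Proof4c
variable {r : ℕ} {M : Fin r → Fin r → Bool}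

theorem backward_dir (A : SigSp r M → ℝ) (hA : Continuous A)
    {ν : Measure (SigSp r M)} (hp : IsProbabilityMeasure ν) (hinv : ν.map shiftS = ν) :
    ∃ μ : Measure (NatExt r M), Holonomic μ ∧ ∫ p, A (proj1 p) ∂μ = ∫ x, A x ∂ν := by
  classical
  set S' : Set (Fin r) := {a | ∃ y : ℕ → Fin r, y 0 = a ∧ ∀ j, M (y (j + 1)) (y j) = true}
    with hS'def
  have mcyl : ∀ (n : ℕ) (a : Fin r), MeasurableSet {x : SigSp r M | x.1 n = a} := by
    intro n a
    have h : Measurable fun x : SigSp r M => x.1 n :=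
      (measurable_pi_apply n).comp measurable_subtype_coe
    exact h (measurableSet_singleton a)
  have keyS : ∀ a : Fin r, ν {x : SigSp r M | x.1 0 = a} ≠ 0 → a ∈ S' := by
    intro a ha
    set S : Set (Fin r) := {b | ν {x : SigSp r M | x.1 0 = b} ≠ 0} with hSdef
    have step : ∀ b : {b // b ∈ S}, ∃ c : {b // b ∈ S}, M c.1 b.1 = true := by
      rintro ⟨b, hb⟩
      have h1 : ν {x : SigSp r M | x.1 1 = b} = ν {x : SigSp r M | x.1 0 = b} := by
        conv_rhs => rw [← hinv]
        rw [Measure.map_apply measurable_shiftS' (mcyl 0 b)]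
        rfl
      by_contra hcon
      push_neg at hcon
      have hz : ∀ c : Fin r, ν {x : SigSp r M | x.1 0 = c ∧ x.1 1 = b} = 0 := by
        intro c
        by_cases hcS : c ∈ S
        · have hemp : {x : SigSp r M | x.1 0 = c ∧ x.1 1 = b} = ∅ := by
            ext x
            simp only [Set.mem_setOf_eq, Set.mem_empty_iff_false, iff_false]
            rintro ⟨h0, h1'⟩
            have hx2 := x.2 0
            rw [h0, h1'] at hx2
            exact hcon ⟨c, hcS⟩ hx2
          rw [hemp]
          exact measure_empty
        · have hc0 : ν {x : SigSp r M | x.1 0 = c} = 0 := by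
            by_contra h
            exact hcS h
          exact measure_mono_null (fun x hx => hx.1) hc0
      have hzz : ν {x : SigSp r M | x.1 1 = b} = 0 := by
        refine measure_mono_null ?_ (measure_iUnion_null hz)
        intro x hx
        exact Set.mem_iUnion.mpr ⟨x.1 0, rfl, hx⟩
      rw [h1] at hzz
      exact hb hzz
    choose g hg using step
    have haS : a ∈ S := ha
    refine ⟨fun n => (g^[n] ⟨a, haS⟩).1, rfl, fun j => ?_⟩
    show M (g^[j + 1] ⟨a, haS⟩).1 (g^[j] ⟨a, haS⟩).1 = true
    rw [Function.iterate_succ_apply']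
    exact hg _
  have hsel : ∀ a : Fin r, ∃ y : ℕ → Fin r,
      a ∈ S' → (y 0 = a ∧ ∀ j, M (y (j + 1)) (y j) = true) := by
    intro a
    by_cases h : a ∈ S'
    · obtain ⟨y, h1, h2⟩ := h
      exact ⟨y, fun _ => ⟨h1, h2⟩⟩
    · exact ⟨fun _ => a, fun h' => absurd h' h⟩
  choose yf hyf using hsel
  have huniv : ν Set.univ ≠ 0 := by simp [hp.measure_univ]
  have hexa : ∃ a : Fin r, ν {x : SigSp r M | x.1 0 = a} ≠ 0 := by
    by_contra h
    push_neg at h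
    have huz : ν Set.univ = 0 := by
      refine measure_mono_null (fun x _ => ?_) (measure_iUnion_null h)
      exact Set.mem_iUnion.mpr ⟨x.1 0, rfl⟩
    exact huniv huz
  obtain ⟨a0, ha0⟩ := hexa
  have ha0S' : a0 ∈ S' := keyS a0 ha0
  obtain ⟨x0, hx0⟩ := nonempty_of_measure_ne_zero ha0
  have q0 : NatExt r M := by
    refine ⟨(⟨fun n => yf a0 (n + 1), fun j => (hyf a0 ha0S').2 (j + 1)⟩, x0), ?_⟩
    show M (yf a0 1) (x0.1 0) = true
    have hx0' : x0.1 0 = a0 := hx0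
    rw [hx0']
    have h01 := (hyf a0 ha0S').2 0
    rwa [(hyf a0 ha0S').1] at h01
  set T : Set (SigSp r M) := {x | x.1 0 ∈ S'} with hTdef
  have hTm : MeasurableSet T := by
    have : T = ⋃ a ∈ S', {x : SigSp r M | x.1 0 = a} := by
      ext x
      simp only [hTdef, Set.mem_setOf_eq, Set.mem_iUnion]
      constructor
      · intro h
        exact ⟨x.1 0, h, rfl⟩
      · rintro ⟨a, ha, h⟩
        rw [h]
        exact ha
    rw [this]
    exact MeasurableSet.biUnion (Set.to_countable _) fun a _ => mcyl 0 a
  let Θ : T → NatExt r M := fun z =>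
    ⟨(⟨yf (z.1.1 0), (hyf _ z.2).2⟩, shiftS z.1), by
      show M (yf (z.1.1 0) 0) (z.1.1 1) = true
      rw [(hyf _ z.2).1]
      exact z.1.2 0⟩
  have hΘm : Measurable Θ := by
    apply Measurable.subtype_mk
    apply Measurable.prodMk
    · apply Measurable.subtype_mk
      exact (measurable_of_countable yf).comp
        ((measurable_pi_apply 0).comp (measurable_subtype_coe.comp measurable_subtype_coe))
    · exact measurable_shiftS'.comp measurable_subtype_coe
  let Ψ : SigSp r M → NatExt r M := fun x =>
    if h : x ∈ T then Θ ⟨x, h⟩ else q0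
  have hΨm : Measurable Ψ := Measurable.dite hΘm measurable_const hTm
  have hΨtau : ∀ x ∈ T, tau (Ψ x) = x := by
    intro x hx
    show tau (if h : x ∈ T then Θ ⟨x, h⟩ else q0) = x
    rw [dif_pos hx]
    apply Subtype.ext
    funext n
    cases n with
    | zero => exact (hyf _ hx).1
    | succ m => rfl
  have hΨproj : ∀ x ∈ T, proj1 (Ψ x) = shiftS x := by
    intro x hx
    show proj1 (if h : x ∈ T then Θ ⟨x, h⟩ else q0) = shiftS x
    rw [dif_pos hx]
    rfl
  have hae : ∀ᵐ x ∂ν, x ∈ T := by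
    rw [ae_iff]
    refine measure_mono_null (fun x hx => ?_)
      (measure_iUnion_null (s := fun a : Fin r => {x : SigSp r M | x.1 0 = a ∧ a ∉ S'})
        fun a => ?_)
    · exact Set.mem_iUnion.mpr ⟨x.1 0, rfl, hx⟩
    · by_cases haS : a ∈ S'
      · have hemp : {x : SigSp r M | x.1 0 = a ∧ a ∉ S'} = ∅ := by
          ext x
          simp [haS]
        simp [hemp]
      · have hz : ν {x : SigSp r M | x.1 0 = a} = 0 := by
          by_contra h
          exact haS (keyS a h)
        exact measure_mono_null (fun x hx => hx.1) hz
  refine ⟨ν.map Ψ, ⟨Measure.isProbabilityMeasure_map hΨm.aemeasurable, ?_⟩, ?_⟩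
  · intro f
    have e1 : ∫ p, f (tau p) ∂(ν.map Ψ) = ∫ x, f (tau (Ψ x)) ∂ν :=
      integral_map hΨm.aemeasurable ((f.continuous.comp continuous_tau).aestronglyMeasurable)
    have e2 : ∫ x, f (tau (Ψ x)) ∂ν = ∫ x, f x ∂ν := by
      refine integral_congr_ae (hae.mono fun x hx => ?_)
      simp only []
      rw [hΨtau x hx]
    have e3 : ∫ p, f (proj1 p) ∂(ν.map Ψ) = ∫ x, f (proj1 (Ψ x)) ∂ν :=
      integral_map hΨm.aemeasurable ((f.continuous.comp continuous_proj1).aestronglyMeasurable)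
    have e4 : ∫ x, f (proj1 (Ψ x)) ∂ν = ∫ x, f (shiftS x) ∂ν := by
      refine integral_congr_ae (hae.mono fun x hx => ?_)
      simp only []
      rw [hΨproj x hx]
    have e5 : ∫ x, f (shiftS x) ∂ν = ∫ x, f x ∂ν := by
      conv_rhs => rw [← hinv]
      rw [integral_map measurable_shiftS'.aemeasurable f.continuous.aestronglyMeasurable]
    rw [e1, e2, e3, e4, e5]
  · have e3 : ∫ p, A (proj1 p) ∂(ν.map Ψ) = ∫ x, A (proj1 (Ψ x)) ∂ν :=
      integral_map hΨm.aemeasurable ((hA.comp continuous_proj1).aestronglyMeasurable)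
    have e4 : ∫ x, A (proj1 (Ψ x)) ∂ν = ∫ x, A (shiftS x) ∂ν := by
      refine integral_congr_ae (hae.mono fun x hx => ?_)
      simp only []
      rw [hΨproj x hx]
    have e5 : ∫ x, A (shiftS x) ∂ν = ∫ x, A x ∂ν := by
      conv_rhs => rw [← hinv]
      rw [integral_map measurable_shiftS'.aemeasurable hA.aestronglyMeasurable]
    rw [e3, e4, e5]

end Proof4c

/-- for a continuous potential depending only on the forward coordinate, the
maximal holonomic value equals the maximal value over `σ`-invariant probabilities. -/
theorem holonomic_sup_eq_invariant_sup
    {r : ℕ} {M : Fin r → Fin r → Bool}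
    (A : SigSp r M → ℝ) (hA : Continuous A) :
    (⨆ μ : {μ : Measure (NatExt r M) // Holonomic μ}, ∫ p, A (proj1 p) ∂(μ.1)) =
      ⨆ μ : {μ : Measure (SigSp r M) // IsProbabilityMeasure μ ∧ μ.map shiftS = μ},
        ∫ x, A x ∂(μ.1) := by
  have hr : Set.range
        (fun μ : {μ : Measure (NatExt r M) // Holonomic μ} => ∫ p, A (proj1 p) ∂(μ.1)) =
      Set.range
        (fun μ : {μ : Measure (SigSp r M) // IsProbabilityMeasure μ ∧ μ.map shiftS = μ} =>
          ∫ x, A x ∂(μ.1)) := by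
    apply Set.Subset.antisymm
    · rintro v ⟨⟨μ, hμ⟩, rfl⟩
      obtain ⟨ν, hν, hval⟩ := forward_dir A hA hμ
      exact ⟨⟨ν, hν⟩, hval⟩
    · rintro v ⟨⟨ν, hν1, hν2⟩, rfl⟩
      obtain ⟨μ, hμ, hval⟩ := backward_dir A hA hν1 hν2
      exact ⟨⟨μ, hμ⟩, hval⟩
  exact congrArg sSup hr
end

section
/- Every calibrated sub-action u for a θ-Hölder potential A satisfies the representation formula u(x̄) = inf over x ∈ Ω(A) of [u(x) + S_A(x,x̄)], for all x̄ ∈ Σ. -/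
open MeasureTheory

/-!
Following minimizers of the calibrated sub-action backwards from `x̄` gives an orbit
`x̄ = x⁰, x¹, …` along which the action telescopes: `∑_{j<k} (A - β_A) = u(xᵏ) - u(x̄)`.
Summing the sub-action inequality along any path gives `u(x̄) ≤ u(x) + S_A(x, x̄)` for every `x`.
Conversely the orbit has a cluster point `z` by compactness. Orbit segments from `x̄` to near `z`
give `S_A(z, x̄) ≤ u(x̄) - u(z)`, and `z` is non-wandering: a segment of the orbit between two
visits near `z` can be restarted at `z` keeping its past coordinates; the new chain agrees with the
old one on ever longer prefixes, so by Hölder continuity the action changes by at most a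
geometric series.
-/

open Filter Topology PiNat Finset

theorem PiNat.hasBasis_nhds_cylinder {E : ℕ → Type*} [∀ n, TopologicalSpace (E n)]
    [∀ n, DiscreteTopology (E n)] (x : ∀ n, E n) :
    (𝓝 x).HasBasis (fun _ : ℕ => True) (cylinder x) := by
  refine ⟨fun s => ⟨fun hs => ?_, fun ⟨n, _, hn⟩ =>
    mem_of_superset ((isOpen_cylinder E x n).mem_nhds (self_mem_cylinder x n)) hn⟩⟩
  obtain ⟨_, ⟨y, n, rfl⟩, hxy, hs⟩ := (isTopologicalBasis_cylinders E).mem_nhds_iff.1 hs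
  exact ⟨n, trivial, (mem_cylinder_iff_eq.1 hxy).symm ▸ hs⟩

section AubryMather

variable {r : ℕ} {M : Fin r → Fin r → Bool}

instance : CompactSpace (SigSp r M) := by
  have h : IsClosed {x : ℕ → Fin r | ∀ j, M (x j) (x (j + 1)) = true} := by
    rw [Set.ofPred_forall]
    refine isClosed_iInter fun j => isClosed_eq ?_ continuous_const
    exact continuous_of_discreteTopology (f := fun a : Fin r × Fin r => M a.1 a.2) |>.comp
      (by fun_prop : Continuous fun x : ℕ → Fin r => (x j, x (j + 1)))
  exact isCompact_iff_compactSpace.1 h.isCompact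

theorem SigSp.hasBasis_nhds_cylinder (x : SigSp r M) :
    (𝓝 x).HasBasis (fun _ : ℕ => True) (fun n => {w : SigSp r M | w.1 ∈ cylinder x.1 n}) := by
  rw [nhds_induced]
  exact (PiNat.hasBasis_nhds_cylinder x.1).comap _

theorem dS_le_pow_iff {lam : ℝ} (hlam0 : 0 < lam) (hlam1 : lam < 1) {x x' : SigSp r M}
    {n : ℕ} : dS lam x x' ≤ lam ^ n ↔ x.1 ∈ cylinder x'.1 n := by
  unfold dS
  split_ifs with h
  · simp only [h, self_mem_cylinder, iff_true]
    positivity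
  · rw [pow_le_pow_iff_right_of_lt_one₀ hlam0 hlam1, mem_cylinder_iff_le_firstDiff h,
      firstDiff_def, dif_pos h]
    congr!

theorem dS_nonneg {lam : ℝ} (hlam : 0 ≤ lam) (x x' : SigSp r M) : 0 ≤ dS lam x x' := by
  unfold dS
  split_ifs <;> positivity

theorem dHat_nonneg {lam : ℝ} (hlam : 0 ≤ lam) (p q : NatExt r M) : 0 ≤ dHat lam p q :=
  le_max_of_le_right (dS_nonneg hlam _ _)

theorem dDual_self (lam : ℝ) (y : DualSp r M) : dDual lam y y = 0 := by
  simp [dDual]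

variable {A : NatExt r M → ℝ} {u : SigSp r M → ℝ}

theorem SubAction.add_sum_le (hu : SubAction A u) {p : ℕ → NatExt r M} {k : ℕ}
    (hp : ∀ j < k, proj1 (p (j + 1)) = tau (p j)) :
    u (proj1 (p 0)) + ∑ j ∈ range (k + 1), (A (p j) - betaA A) ≤ u (tau (p k)) := by
  induction k with
  | zero =>
    have := hu.2 (p 0)
    rw [sum_range_one]
    linarith
  | succ k ih =>
    have hk := ih fun j hj => hp j (by omega)
    have := hu.2 (p (k + 1))
    rw [hp k k.lt_succ_self] at this
    rw [sum_range_succ]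
    linarith

theorem SubAction.le_add_manePot (hu : SubAction A u) {lam : ℝ} (hlam0 : 0 < lam)
    (hlam1 : lam < 1) (x xbar : SigSp r M) :
    (u xbar : EReal) ≤ u x + ManePot lam A x xbar := by
  suffices h : ((u xbar - u x : ℝ) : EReal) ≤ ManePot lam A x xbar by
    rw [EReal.coe_sub, EReal.sub_le_iff_le_add (.inl (EReal.coe_ne_bot _))
      (.inl (EReal.coe_ne_top _)), add_comm] at h
    exact h
  refine EReal.ge_of_forall_gt_iff_ge.1 fun c hc => ?_
  have hδ : 0 < u xbar - u x - c := sub_pos.2 (by exact_mod_cast hc)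
  obtain ⟨n, -, hn⟩ := (SigSp.hasBasis_nhds_cylinder x).mem_iff.1
    (hu.1.continuousAt ((nhds_basis_abs_sub_lt (u x)).mem_of_mem hδ))
  refine le_trans ?_ (le_iSup₂ (f := fun ε _ => SAeps lam A ε x xbar) _ (pow_pos hlam0 n))
  refine le_sInf ?_
  rintro _ ⟨_, p, ⟨hk, hp0, hp, hend⟩, rfl⟩
  obtain ⟨k, rfl⟩ : ∃ k, _ = k + 1 := ⟨_, (Nat.sub_add_cancel hk).symm⟩
  rw [Nat.add_sub_cancel] at hend
  have hsum := hu.add_sum_le (k := k) fun j hj => hp j (by omega)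
  have hclose : |u (tau (p k)) - u x| < u xbar - u x - c :=
    hn ((dS_le_pow_iff hlam0 hlam1).1 hend.le)
  rw [hp0] at hsum
  rw [EReal.coe_le_coe_iff]
  linarith [(abs_lt.1 hclose).2]

namespace Calibrated

theorem subAction (hu : Calibrated A u) : SubAction A u :=
  ⟨hu.1, fun p => (hu.2 (proj1 p)).2 ⟨p, rfl, rfl⟩⟩

noncomputable def minimizer (hu : Calibrated A u) (x : SigSp r M) : NatExt r M :=
  (hu.2 x).1.choose

theorem proj1_minimizer (hu : Calibrated A u) (x : SigSp r M) : proj1 (hu.minimizer x) = x :=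
  (hu.2 x).1.choose_spec.1

theorem apply_eq_minimizer (hu : Calibrated A u) (x : SigSp r M) :
    u x = u (tau (hu.minimizer x)) - A (hu.minimizer x) + betaA A :=
  (hu.2 x).1.choose_spec.2

noncomputable def orbit (hu : Calibrated A u) (xbar : SigSp r M) : ℕ → SigSp r M
  | 0 => xbar
  | n + 1 => tau (hu.minimizer (hu.orbit xbar n))

theorem orbit_zero (hu : Calibrated A u) (xbar : SigSp r M) : hu.orbit xbar 0 = xbar :=
  rfl

noncomputable def orbitChain (hu : Calibrated A u) (xbar : SigSp r M) (n : ℕ) : NatExt r M :=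
  hu.minimizer (hu.orbit xbar n)

theorem proj1_orbitChain (hu : Calibrated A u) (xbar : SigSp r M) (n : ℕ) :
    proj1 (hu.orbitChain xbar n) = hu.orbit xbar n :=
  hu.proj1_minimizer _

theorem proj1_orbitChain_succ (hu : Calibrated A u) (xbar : SigSp r M) (n : ℕ) :
    proj1 (hu.orbitChain xbar (n + 1)) = tau (hu.orbitChain xbar n) :=
  hu.proj1_orbitChain xbar (n + 1)

theorem sum_orbitChain (hu : Calibrated A u) (xbar : SigSp r M) (n k : ℕ) :
    ∑ j ∈ range k, (A (hu.orbitChain xbar (n + j)) - betaA A) =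
      u (hu.orbit xbar (n + k)) - u (hu.orbit xbar n) := by
  have hstep (j : ℕ) : A (hu.orbitChain xbar j) - betaA A =
      u (hu.orbit xbar (j + 1)) - u (hu.orbit xbar j) := by
    have := hu.apply_eq_minimizer (hu.orbit xbar j)
    rw [orbitChain, orbit]
    linarith
  simp only [hstep]
  exact sum_range_sub (fun j => u (hu.orbit xbar (n + j))) k

theorem manePot_le_of_mapClusterPt (hu : Calibrated A u) {lam : ℝ} (hlam0 : 0 < lam)
    (hlam1 : lam < 1) {xbar z : SigSp r M} (hz : MapClusterPt z atTop (hu.orbit xbar)) :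
    ManePot lam A z xbar ≤ ((u xbar - u z : ℝ) : EReal) := by
  refine iSup₂_le fun ε hε => EReal.le_of_forall_lt_iff_le.1 fun c hc => ?_
  have hδ : 0 < c - (u xbar - u z) := sub_pos.2 (by exact_mod_cast hc)
  obtain ⟨n, hn⟩ := exists_pow_lt_of_lt_one hε hlam1
  have hnear : ∀ᶠ w in 𝓝 z, w.1 ∈ cylinder z.1 n ∧ |u w - u z| < c - (u xbar - u z) :=
    ((SigSp.hasBasis_nhds_cylinder z).eventually_iff.2 ⟨n, trivial, fun _ h => h⟩).and
      (hu.1.continuousAt ((nhds_basis_abs_sub_lt (u z)).mem_of_mem hδ))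
  obtain ⟨m, hm, hmz, hmu⟩ := frequently_atTop.1 (hz.frequently hnear) 1
  obtain ⟨k, rfl⟩ : ∃ k, m = k + 1 := ⟨m - 1, by omega⟩
  have hpath : InPath lam ε z xbar (k + 1) (hu.orbitChain xbar) :=
    ⟨hm, hu.proj1_orbitChain xbar 0, fun j _ => hu.proj1_orbitChain_succ xbar j,
      ((dS_le_pow_iff hlam0 hlam1).2 hmz).trans_lt hn⟩
  unfold SAeps
  refine le_trans (sInf_le ⟨k + 1, _, hpath, rfl⟩) ?_
  have hsum := hu.sum_orbitChain xbar 0 (k + 1)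
  simp only [zero_add, orbit_zero] at hsum
  rw [hsum, EReal.coe_le_coe_iff]
  linarith [(abs_lt.1 hmu).1]

end Calibrated

theorem abs_sum_range_le_of_abs_le_geom {a : ℕ → ℝ} {c ρ : ℝ} (hc : 0 ≤ c) (hρ0 : 0 ≤ ρ)
    (hρ1 : ρ < 1) {N : ℕ} (h : ∀ j, |a j| ≤ c * ρ ^ (N + j)) (k : ℕ) :
    |∑ j ∈ range k, a j| ≤ c * ρ ^ N / (1 - ρ) :=
  calc |∑ j ∈ range k, a j|
      ≤ ∑ j ∈ range k, c * ρ ^ (N + j) :=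
        (abs_sum_le_sum_abs _ _).trans (sum_le_sum fun j _ => h j)
    _ = c * ∑ i ∈ Ico N (N + k), ρ ^ i := by
      rw [mul_sum, sum_Ico_eq_sum_range, Nat.add_sub_cancel_left]
    _ ≤ c * (ρ ^ N / (1 - ρ)) := by gcongr; exact geom_sum_Ico_le_of_lt_one hρ0 hρ1
    _ = c * ρ ^ N / (1 - ρ) := (mul_div_assoc _ _ _).symm

theorem prepend_mem_cylinder (a : Fin r) {x x' : ℕ → Fin r} {n : ℕ} (h : x ∈ cylinder x' n) :
    prepend a x ∈ cylinder (prepend a x') (n + 1) := by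
  rintro (_ | i) hi
  · rfl
  · exact h i (by omega)

/-- `(y, x)` where `y` is the past of `p`; the junk value `p` when `(y, x) ∉ Σ̂`. -/
def reroot (p : NatExt r M) (x : SigSp r M) : NatExt r M :=
  if h : M (p.1.1.1 0) (x.1 0) = true then ⟨(p.1.1, x), h⟩ else p

section reroot

variable {p : NatExt r M} {x : SigSp r M} {n : ℕ}

theorem reroot_val (hx : x.1 ∈ cylinder (proj1 p).1 (n + 1)) : (reroot p x).1 = (p.1.1, x) := by
  have h : M (p.1.1.1 0) (x.1 0) = true := by rw [hx 0 n.succ_pos]; exact p.2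
  simp [reroot, h]

theorem proj1_reroot (hx : x.1 ∈ cylinder (proj1 p).1 (n + 1)) : proj1 (reroot p x) = x :=
  congrArg Prod.snd (reroot_val hx)

theorem tau_reroot_mem_cylinder (hx : x.1 ∈ cylinder (proj1 p).1 (n + 1)) :
    (tau (reroot p x)).1 ∈ cylinder (tau p).1 (n + 2) := by
  change prepend ((reroot p x).1.1.1 0) (reroot p x).1.2.1 ∈
    cylinder (prepend (p.1.1.1 0) p.1.2.1) (n + 2)
  rw [reroot_val hx]
  exact prepend_mem_cylinder _ hx

theorem dHat_reroot_le {lam : ℝ} (hlam0 : 0 < lam) (hlam1 : lam < 1)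
    (hx : x.1 ∈ cylinder (proj1 p).1 (n + 1)) : dHat lam (reroot p x) p ≤ lam ^ (n + 1) := by
  have hdS : dS lam x (proj1 p) ≤ lam ^ (n + 1) := (dS_le_pow_iff hlam0 hlam1).2 hx
  simp only [dHat, reroot_val hx, dDual_self]
  exact max_le (by positivity) hdS

end reroot

def shadowOrbit (q : ℕ → NatExt r M) (z : SigSp r M) : ℕ → SigSp r M
  | 0 => z
  | j + 1 => tau (reroot (q j) (shadowOrbit q z j))

/-- The chain with the same pasts as `q`, restarted at `z`. -/
def shadowChain (q : ℕ → NatExt r M) (z : SigSp r M) (j : ℕ) : NatExt r M :=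
  reroot (q j) (shadowOrbit q z j)

section shadow

variable {q : ℕ → NatExt r M} {z : SigSp r M} {N : ℕ}

theorem shadowOrbit_mem_cylinder (hq : ∀ j, proj1 (q (j + 1)) = tau (q j))
    (hz : z.1 ∈ cylinder (proj1 (q 0)).1 (N + 1)) (j : ℕ) :
    (shadowOrbit q z j).1 ∈ cylinder (proj1 (q j)).1 (N + j + 1) := by
  induction j with
  | zero => exact hz
  | succ j ih =>
    rw [hq]
    exact tau_reroot_mem_cylinder ih

theorem proj1_shadowChain (hq : ∀ j, proj1 (q (j + 1)) = tau (q j))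
    (hz : z.1 ∈ cylinder (proj1 (q 0)).1 (N + 1)) (j : ℕ) :
    proj1 (shadowChain q z j) = shadowOrbit q z j :=
  proj1_reroot (shadowOrbit_mem_cylinder hq hz j)

theorem shadowChain_inPath {lam ε : ℝ} (hlam0 : 0 < lam) (hlam1 : lam < 1)
    (hε : lam ^ (N + 1) < ε) (hq : ∀ j, proj1 (q (j + 1)) = tau (q j))
    (hz : z.1 ∈ cylinder (proj1 (q 0)).1 (N + 1)) {x : SigSp r M} {k : ℕ}
    (hx : (proj1 (q (k + 1))).1 ∈ cylinder x.1 (N + 1)) :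
    InPath lam ε x z (k + 1) (shadowChain q z) := by
  refine ⟨k.succ_pos, proj1_shadowChain hq hz 0, fun j _ => proj1_shadowChain hq hz (j + 1), ?_⟩
  have hend := shadowOrbit_mem_cylinder hq hz (k + 1)
  rw [Nat.add_sub_cancel]
  refine lt_of_le_of_lt ((dS_le_pow_iff hlam0 hlam1).2 fun i hi => ?_) hε
  exact (hend i (by omega)).trans (hx i hi)

theorem abs_sum_shadowChain_sub_le {lam θ C : ℝ} {A : NatExt r M → ℝ} (hlam0 : 0 < lam)
    (hlam1 : lam < 1) (hθ : 0 < θ) (hC : 0 ≤ C) (hA : HolderOnExt lam θ C A)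
    (hq : ∀ j, proj1 (q (j + 1)) = tau (q j)) (hz : z.1 ∈ cylinder (proj1 (q 0)).1 (N + 1))
    (k : ℕ) :
    |∑ j ∈ range k, (A (shadowChain q z j) - A (q j))| ≤
      C * (lam ^ θ) ^ (N + 1) / (1 - lam ^ θ) := by
  refine abs_sum_range_le_of_abs_le_geom hC (by positivity)
    (Real.rpow_lt_one hlam0.le hlam1 hθ) (fun j => ?_) k
  have hd := dHat_reroot_le hlam0 hlam1 (shadowOrbit_mem_cylinder hq hz j)
  calc |A (shadowChain q z j) - A (q j)| ≤ C * dHat lam (shadowChain q z j) (q j) ^ θ := hA _ _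
    _ ≤ C * (lam ^ (N + j + 1)) ^ θ := by
      gcongr
      · exact dHat_nonneg hlam0.le _ _
      · exact hd
    _ = C * (lam ^ θ) ^ (N + 1 + j) := by
      rw [← Real.rpow_pow_comm hlam0.le, Nat.add_right_comm]

end shadow

theorem Calibrated.nonWand_of_mapClusterPt (hu : Calibrated A u) {lam θ C : ℝ}
    (hlam0 : 0 < lam) (hlam1 : lam < 1) (hθ : 0 < θ) (hC : 0 ≤ C) (hA : HolderOnExt lam θ C A)
    {xbar z : SigSp r M} (hz : MapClusterPt z atTop (hu.orbit xbar)) : NonWand lam A z := by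
  intro ε hε
  have hρ1 : lam ^ θ < 1 := Real.rpow_lt_one hlam0.le hlam1 hθ
  have hlamN : Tendsto (fun N : ℕ => lam ^ (N + 1)) atTop (𝓝 0) :=
    (tendsto_pow_atTop_nhds_zero_of_lt_one hlam0.le hlam1).comp (tendsto_add_atTop_nat 1)
  have herrN : Tendsto (fun N : ℕ => C * (lam ^ θ) ^ (N + 1) / (1 - lam ^ θ)) atTop (𝓝 0) := by
    simpa using (((tendsto_pow_atTop_nhds_zero_of_lt_one (by positivity) hρ1).comp
      (tendsto_add_atTop_nat 1)).const_mul C).div_const (1 - lam ^ θ)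
  obtain ⟨N, hN, herr⟩ :=
    ((hlamN.eventually (gt_mem_nhds hε)).and (herrN.eventually (gt_mem_nhds (half_pos hε)))).exists
  have hnear : ∀ᶠ w in 𝓝 z, w.1 ∈ cylinder z.1 (N + 1) ∧ |u w - u z| < ε / 4 :=
    ((SigSp.hasBasis_nhds_cylinder z).eventually_iff.2 ⟨N + 1, trivial, fun _ h => h⟩).and
      (hu.1.continuousAt ((nhds_basis_abs_sub_lt (u z)).mem_of_mem (by positivity)))
  obtain ⟨n, -, hnz, hnu⟩ := frequently_atTop.1 (hz.frequently hnear) 0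
  obtain ⟨m, hm, hmz, hmu⟩ := frequently_atTop.1 (hz.frequently hnear) (n + 1)
  obtain ⟨k, rfl⟩ : ∃ k, m = n + (k + 1) := ⟨m - n - 1, by omega⟩
  set q := fun j => hu.orbitChain xbar (n + j)
  have hq (j : ℕ) : proj1 (q (j + 1)) = tau (q j) := hu.proj1_orbitChain_succ xbar (n + j)
  have hzq : z.1 ∈ cylinder (proj1 (q 0)).1 (N + 1) := by
    rw [hu.proj1_orbitChain]
    exact (mem_cylinder_comm _ _ _).1 hnz
  refine ⟨k + 1, shadowChain q z,
    shadowChain_inPath hlam0 hlam1 hN hq hzq (by rw [hu.proj1_orbitChain]; exact hmz), ?_⟩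
  have hshadow := abs_sum_shadowChain_sub_le hlam0 hlam1 hθ hC hA hq hzq (k + 1)
  have hsplit : ∑ j ∈ range (k + 1), (A (shadowChain q z j) - betaA A) =
      ∑ j ∈ range (k + 1), (A (q j) - betaA A) +
        ∑ j ∈ range (k + 1), (A (shadowChain q z j) - A (q j)) := by
    rw [← sum_add_distrib]
    exact sum_congr rfl fun _ _ => by ring
  rw [hsplit, hu.sum_orbitChain xbar n (k + 1)]
  rw [abs_lt] at hnu hmu ⊢
  rw [abs_le] at hshadow
  constructor <;> linarith

end AubryMather

theorem representation_formula_general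
    {r : ℕ} {M : Fin r → Fin r → Bool}
    (lam θ C : ℝ) (hlam0 : 0 < lam) (hlam1 : lam < 1) (hθ : 0 < θ) (hC : 0 ≤ C)
    (A : NatExt r M → ℝ) (hA : HolderOnExt lam θ C A)
    (u : SigSp r M → ℝ) (hu : Calibrated A u)
    (xbar : SigSp r M) :
    ((u xbar : ℝ) : EReal) =
      ⨅ x : {x : SigSp r M // NonWand lam A x},
        (((u x.1 : ℝ) : EReal) + ManePot lam A x.1 xbar) := by
  obtain ⟨z, hz⟩ := exists_clusterPt_of_compactSpace (map (hu.orbit xbar) atTop)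
  refine le_antisymm (le_iInf fun x => hu.subAction.le_add_manePot hlam0 hlam1 x.1 xbar) ?_
  calc ⨅ x : {x : SigSp r M // NonWand lam A x}, (((u x.1 : ℝ) : EReal) + ManePot lam A x.1 xbar)
      ≤ u z + ManePot lam A z xbar :=
        iInf_le_of_le ⟨z, hu.nonWand_of_mapClusterPt hlam0 hlam1 hθ hC hA hz⟩ le_rfl
    _ ≤ u z + ((u xbar - u z : ℝ) : EReal) :=
        add_le_add_right (hu.manePot_le_of_mapClusterPt hlam0 hlam1 hz) _
    _ = u xbar := by rw [← EReal.coe_add, add_sub_cancel]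

/-- the representation formula
`u(x̄) = inf_{x ∈ Ω(A)} [u(x) + S_A(x, x̄)]` for calibrated sub-actions. -/
theorem representation_formula
    {r : ℕ} {M : Fin r → Fin r → Bool}
    (lam θ C : ℝ) (hlam0 : 0 < lam) (hlam1 : lam < 1) (hθ : 0 < θ) (hC : 0 ≤ C)
    (A : NatExt r M → ℝ) (hA : HolderOnExt lam θ C A)
    (hΩ : ∃ x : SigSp r M, NonWand lam A x)
    (u : SigSp r M → ℝ) (hu : Calibrated A u)
    (xbar : SigSp r M) :
    ((u xbar : ℝ) : EReal) =
      ⨅ x : {x : SigSp r M // NonWand lam A x},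
        (((u x.1 : ℝ) : EReal) + ManePot lam A x.1 xbar) :=
  representation_formula_general lam θ C hlam0 hlam1 hθ hC A hA u hu xbar
end
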